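/- Let N be a numerical monoid (a cofinite submonoid of the nonnegative integers under addition). Then N has a purely long or a purely short atom if and only if N has exactly two atoms (minimal generators), in which case the smaller generator is the unique purely long atom and the larger generator is the unique purely short atom. -/
import Mathlib


open Multiset

namespace LF

variable (M : AddSubmonoid ℕ)

/-- An atom of the additive monoid `M`. -/
def IsAtomOf (a : ℕ) : Prop :=
  a ∈ M ∧ a ≠ 0 ∧ ∀ u ∈ M, ∀ v ∈ M, a = u + v → u = 0 ∨ v = 0

/-- Factorizations of `x` in `M`: multisets of atoms summing to `x`. -/
def FactorsOf (x : ℕ) : Set (Multiset ℕ) :=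
  {s | (∀ a ∈ s, IsAtomOf M a) ∧ s.sum = x}

/-- `M` is atomic. -/
def Atomic : Prop := ∀ x ∈ M, x ≠ 0 → (FactorsOf M x).Nonempty

/-- `M` is length-factorial. -/
def LengthFactorial : Prop :=
  ∀ x ∈ M, ∀ s ∈ FactorsOf M x, ∀ t ∈ FactorsOf M x, card s = card t → s = t

/-- `M` is factorial. -/
def Factorial : Prop := ∀ x ∈ M, ∃! s, s ∈ FactorsOf M x

/-- A factorization relation in `M`. -/
def IsRel (z1 z2 : Multiset ℕ) : Prop :=
  (∀ a ∈ z1, IsAtomOf M a) ∧ (∀ a ∈ z2, IsAtomOf M a) ∧ z1.sum = z2.sum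

/-- An irredundant pair: no common atom. -/
def Irredundant (z1 z2 : Multiset ℕ) : Prop := ∀ a, a ∈ z1 → a ∉ z2

/-- `p` is a prime element of `M` (divisibility taken in `M`). -/
def IsPrimeElem (p : ℕ) : Prop :=
  p ∈ M ∧ p ≠ 0 ∧ ∀ a ∈ M, ∀ b ∈ M, (∃ c ∈ M, a + b = p + c) →
    (∃ c ∈ M, a = p + c) ∨ (∃ c ∈ M, b = p + c)

/-- A purely long atom of `M`. -/
def PurelyLong (a : ℕ) : Prop :=
  IsAtomOf M a ∧ ¬ IsPrimeElem M a ∧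
    ∀ z1 z2, IsRel M z1 z2 → Irredundant z1 z2 → card z1 ≠ card z2 →
      a ∈ z1 → card z2 < card z1

/-- A purely short atom of `M`. -/
def PurelyShort (a : ℕ) : Prop :=
  IsAtomOf M a ∧ ¬ IsPrimeElem M a ∧
    ∀ z1 z2, IsRel M z1 z2 → Irredundant z1 z2 → card z1 ≠ card z2 →
      a ∈ z1 → card z1 < card z2
lemma exists_factors : ∀ x, x ∈ M → ∃ s : Multiset ℕ, (∀ a ∈ s, IsAtomOf M a) ∧ s.sum = x := by
  intro x
  induction x using Nat.strong_induction_on with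
  | _ x ih =>
    intro hx
    rcases eq_or_ne x 0 with rfl | hx0
    · exact ⟨0, by simp⟩
    by_cases hat : IsAtomOf M x
    · exact ⟨{x}, by simp [hat]⟩
    · simp only [IsAtomOf] at hat
      push_neg at hat
      obtain ⟨u, hu, v, hv, heq, hu0, hv0⟩ := hat hx hx0
      obtain ⟨s, hs, hsum⟩ := ih u (by omega) hu
      obtain ⟨t, ht, htsum⟩ := ih v (by omega) hv
      exact ⟨s + t, fun a ha => (Multiset.mem_add.mp ha).elim (hs a) (ht a),
        by simp [hsum, htsum, heq]⟩

lemma sum_two (a b : ℕ) : ∀ s : Multiset ℕ, (∀ x ∈ s, x = a ∨ x = b) →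
    ∃ m n, s.sum = m * a + n * b := by
  intro s
  induction s using Multiset.induction_on with
  | empty => exact fun _ => ⟨0, 0, by simp⟩
  | cons x s ih =>
    intro h
    obtain ⟨m, n, hmn⟩ := ih (fun y hy => h y (Multiset.mem_cons_of_mem hy))
    rcases h x (Multiset.mem_cons_self x s) with rfl | rfl
    · exact ⟨m + 1, n, by simp [hmn]; ring⟩
    · exact ⟨m, n + 1, by simp [hmn]; ring⟩

lemma exists_threshold (hcof : {n : ℕ | n ∉ M}.Finite) : ∃ N, ∀ n, N ≤ n → n ∈ M := by
  obtain ⟨N, hN⟩ := hcof.bddAbove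
  refine ⟨N + 1, fun n hn => ?_⟩
  by_contra h
  exact absurd (hN h) (by omega)

lemma coprime_of_atoms (hcof : {n : ℕ | n ∉ M}.Finite) (a b : ℕ)
    (hA : ∀ c, IsAtomOf M c → c = a ∨ c = b) : Nat.Coprime a b := by
  obtain ⟨N, hN⟩ := exists_threshold M hcof
  have key : ∀ x ∈ M, Nat.gcd a b ∣ x := by
    intro x hx
    obtain ⟨s, hs, rfl⟩ := exists_factors M x hx
    obtain ⟨m, n, h⟩ := sum_two a b s (fun y hy => hA y (hs y hy))
    rw [h]
    exact dvd_add (Dvd.dvd.mul_left (Nat.gcd_dvd_left a b) m)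
      (Dvd.dvd.mul_left (Nat.gcd_dvd_right a b) n)
  have h1 := key N (hN N le_rfl)
  have h2 := key (N + 1) (hN _ (by omega))
  have h3 : Nat.gcd a b ∣ 1 := by simpa using Nat.dvd_sub h2 h1
  exact Nat.dvd_one.mp h3

lemma mem_char {a b : ℕ} (hA : ∀ c, IsAtomOf M c → c = a ∨ c = b) {x : ℕ} (hx : x ∈ M) :
    ∃ m n, x = m * a + n * b := by
  obtain ⟨s, hs, rfl⟩ := exists_factors M _ hx
  obtain ⟨m, n, h⟩ := sum_two a b s (fun y hy => hA y (hs y hy))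
  exact ⟨m, n, h⟩

lemma two_le {a b : ℕ} (hb : IsAtomOf M b) (haM : a ∈ M) (ha0 : a ≠ 0) (hab : a < b) :
    2 ≤ a := by
  by_contra h
  have ha1 : a = 1 := by omega
  subst ha1
  obtain ⟨hbM, hb0, hmin⟩ := hb
  have h1 : (b - 1) ∈ M := by
    simpa [smul_eq_mul] using M.nsmul_mem haM (b - 1)
  rcases hmin 1 haM (b - 1) h1 (by omega) with h | h <;> omega

lemma refute_long {a b c : ℕ} (ha : IsAtomOf M a) (hb : IsAtomOf M b) (hc : IsAtomOf M c)
    (hab : a ≠ b) (hcb : c ≠ b) (hbc : b < c) : ¬ PurelyLong M a := by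
  rintro ⟨_, _, h⟩
  have hb0 : b ≠ 0 := hb.2.1
  have ha0 : a ≠ 0 := ha.2.1
  set z1 : Multiset ℕ := Multiset.replicate b a + Multiset.replicate (b * b) c with hz1
  set z2 : Multiset ℕ := Multiset.replicate (a + b * c) b with hz2
  have hmem1 : ∀ x ∈ z1, x = a ∨ x = c := by
    intro x hx
    rcases Multiset.mem_add.mp hx with hx | hx
    · exact Or.inl (Multiset.eq_of_mem_replicate hx)
    · exact Or.inr (Multiset.eq_of_mem_replicate hx)
  have hrel : IsRel M z1 z2 := by
    refine ⟨fun x hx => ?_, fun x hx => ?_, ?_⟩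
    · rcases hmem1 x hx with rfl | rfl
      exacts [ha, hc]
    · obtain rfl := Multiset.eq_of_mem_replicate hx
      exact hb
    · simp only [hz1, hz2, Multiset.sum_add, Multiset.sum_replicate, smul_eq_mul]
      ring
  have hirr : Irredundant z1 z2 := by
    intro x hx hx2
    have hxb := Multiset.eq_of_mem_replicate hx2
    rcases hmem1 x hx with rfl | rfl
    · exact hab hxb
    · exact hcb hxb
  have hc1 : card z1 = b + b * b := by simp [hz1]
  have hc2 : card z2 = a + b * c := by simp [hz2]
  have haz : a ∈ z1 := Multiset.mem_add.mpr (Or.inl (Multiset.mem_replicate.mpr ⟨hb0, rfl⟩))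
  have hmul : b * (b + 1) ≤ b * c := Nat.mul_le_mul_left b hbc
  have hlt : b + b * b < a + b * c := by nlinarith [Nat.one_le_iff_ne_zero.mpr ha0]
  have h2 := h z1 z2 hrel hirr (by rw [hc1, hc2]; exact Nat.ne_of_lt hlt) haz
  rw [hc1, hc2] at h2
  exact Nat.lt_asymm hlt h2

lemma refute_short {a b c : ℕ} (ha : IsAtomOf M a) (hb : IsAtomOf M b) (hc : IsAtomOf M c)
    (hab : a ≠ b) (hcb : c ≠ b) (hcb' : c < b) : ¬ PurelyShort M a := by
  rintro ⟨_, _, h⟩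
  have hb0 : b ≠ 0 := hb.2.1
  have ha0 : a ≠ 0 := ha.2.1
  set z1 : Multiset ℕ := Multiset.replicate b a + Multiset.replicate (a * b) c with hz1
  set z2 : Multiset ℕ := Multiset.replicate (a + a * c) b with hz2
  have hmem1 : ∀ x ∈ z1, x = a ∨ x = c := by
    intro x hx
    rcases Multiset.mem_add.mp hx with hx | hx
    · exact Or.inl (Multiset.eq_of_mem_replicate hx)
    · exact Or.inr (Multiset.eq_of_mem_replicate hx)
  have hrel : IsRel M z1 z2 := by
    refine ⟨fun x hx => ?_, fun x hx => ?_, ?_⟩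
    · rcases hmem1 x hx with rfl | rfl
      exacts [ha, hc]
    · obtain rfl := Multiset.eq_of_mem_replicate hx
      exact hb
    · simp only [hz1, hz2, Multiset.sum_add, Multiset.sum_replicate, smul_eq_mul]
      ring
  have hirr : Irredundant z1 z2 := by
    intro x hx hx2
    have hxb := Multiset.eq_of_mem_replicate hx2
    rcases hmem1 x hx with rfl | rfl
    · exact hab hxb
    · exact hcb hxb
  have hc1 : card z1 = b + a * b := by simp [hz1]
  have hc2 : card z2 = a + a * c := by simp [hz2]
  have haz : a ∈ z1 := Multiset.mem_add.mpr (Or.inl (Multiset.mem_replicate.mpr ⟨hb0, rfl⟩))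
  have hmul : a * (c + 1) ≤ a * b := Nat.mul_le_mul_left a hcb'
  have hlt : a + a * c < b + a * b := by nlinarith [Nat.one_le_iff_ne_zero.mpr hb0]
  have h2 := h z1 z2 hrel hirr (by rw [hc1, hc2]; exact (Nat.ne_of_lt hlt).symm) haz
  rw [hc1, hc2] at h2
  exact Nat.lt_asymm hlt h2

lemma rel_struct {a b : ℕ} (hA : ∀ c, IsAtomOf M c → c = a ∨ c = b) (hab : a ≠ b)
    (ha0 : a ≠ 0) (hb0 : b ≠ 0) (hco : Nat.Coprime a b)
    {z1 z2 : Multiset ℕ} (hrel : IsRel M z1 z2) (hirr : Irredundant z1 z2) (haz : a ∈ z1) :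
    ∃ k, 0 < k ∧ card z1 = k * b ∧ card z2 = k * a := by
  obtain ⟨h1, h2, hsum⟩ := hrel
  have haz2 : a ∉ z2 := hirr a haz
  have hbz1 : b ∉ z1 := by
    intro hbz
    have hbz2 : b ∉ z2 := hirr b hbz
    have hz2 : z2 = 0 := by
      by_contra h0
      obtain ⟨x, hx⟩ := Multiset.exists_mem_of_ne_zero h0
      rcases hA x (h2 x hx) with rfl | rfl
      exacts [haz2 hx, hbz2 hx]
    rw [hz2] at hsum
    simp at hsum
    have hle : a ≤ z1.sum := Multiset.single_le_sum (fun x _ => Nat.zero_le x) a haz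
    omega
  have hz1r : z1 = Multiset.replicate (card z1) a :=
    Multiset.eq_replicate_card.mpr (fun x hx => by
      rcases hA x (h1 x hx) with rfl | rfl
      · rfl
      · exact absurd hx hbz1)
  have hz2r : z2 = Multiset.replicate (card z2) b :=
    Multiset.eq_replicate_card.mpr (fun x hx => by
      rcases hA x (h2 x hx) with rfl | rfl
      · exact absurd hx haz2
      · rfl)
  have e1 : z1.sum = card z1 * a := by
    conv_lhs => rw [hz1r]
    rw [Multiset.sum_replicate, smul_eq_mul]
  have e2 : z2.sum = card z2 * b := by
    conv_lhs => rw [hz2r]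
    rw [Multiset.sum_replicate, smul_eq_mul]
  have hs : card z1 * a = card z2 * b := by rw [← e1, ← e2, hsum]
  have hbm : b ∣ card z1 :=
    Nat.Coprime.dvd_of_dvd_mul_right hco.symm ⟨card z2, by rw [hs]; ring⟩
  obtain ⟨k, hk⟩ := hbm
  have hcard1 : 0 < card z1 := Multiset.card_pos.mpr (fun h => by simp [h] at haz)
  have hk0 : 0 < k := by
    rcases Nat.eq_zero_or_pos k with rfl | h
    · simp [hk] at hcard1
    · exact h
  have hn : card z2 * b = (k * a) * b := by
    rw [← hs, hk]; ring
  have hn2 : card z2 = k * a := Nat.eq_of_mul_eq_mul_right (Nat.pos_of_ne_zero hb0) hn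
  exact ⟨k, hk0, by rw [hk, mul_comm], hn2⟩

lemma not_prime_small {a b : ℕ} (hA : ∀ c, IsAtomOf M c → c = a ∨ c = b)
    (ha : IsAtomOf M a) (hb : IsAtomOf M b) (hab : a < b) (hco : Nat.Coprime a b) :
    ¬ IsPrimeElem M a := by
  have ha2 : 2 ≤ a := two_le M hb ha.1 ha.2.1 hab
  obtain ⟨a', rfl⟩ : ∃ a', a = a' + 1 := ⟨a - 1, by omega⟩
  obtain ⟨b', rfl⟩ : ∃ b', b = b' + 1 := ⟨b - 1, by omega⟩
  rintro ⟨_, _, hp⟩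
  have hbM : (b' + 1) ∈ M := hb.1
  have hvM : a' * (b' + 1) ∈ M := by
    simpa [smul_eq_mul] using M.nsmul_mem hbM a'
  have hex : ∃ c ∈ M, (b' + 1) + a' * (b' + 1) = (a' + 1) + c := by
    refine ⟨b' * (a' + 1), ?_, by ring⟩
    simpa [smul_eq_mul] using M.nsmul_mem ha.1 b'
  rcases hp (b' + 1) hbM (a' * (b' + 1)) hvM hex with ⟨c, hcM, hc⟩ | ⟨c, hcM, hc⟩
  · obtain ⟨m, n, rfl⟩ := mem_char M hA hcM
    rcases Nat.eq_zero_or_pos n with rfl | hn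
    · have hdvd : (a' + 1) ∣ (b' + 1) := ⟨m + 1, by linarith⟩
      have := Nat.Coprime.eq_one_of_dvd hco hdvd
      omega
    · have hnb : b' + 1 ≤ n * (b' + 1) := Nat.le_mul_of_pos_left _ hn
      have hma : 1 ≤ (a' + 1) := by omega
      nlinarith
  · obtain ⟨m, n, rfl⟩ := mem_char M hA hcM
    have hna : n < a' := by
      by_contra hge
      push_neg at hge
      have : a' * (b' + 1) ≤ n * (b' + 1) := Nat.mul_le_mul_right _ hge
      nlinarith
    obtain ⟨d, rfl⟩ : ∃ d, a' = n + (d + 1) := ⟨a' - n - 1, by omega⟩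
    have key : (d + 1) * (b' + 1) = (m + 1) * (n + (d + 1) + 1) := by nlinarith
    have hdvd : (n + (d + 1) + 1) ∣ (d + 1) * (b' + 1) := ⟨m + 1, by rw [key]; ring⟩
    have hdd : (n + (d + 1) + 1) ∣ (d + 1) :=
      Nat.Coprime.dvd_of_dvd_mul_right hco hdvd
    have := Nat.le_of_dvd (by omega) hdd
    omega

lemma not_prime_large {a b : ℕ} (hA : ∀ c, IsAtomOf M c → c = a ∨ c = b)
    (ha : IsAtomOf M a) (hb : IsAtomOf M b) (hab : a < b) (hco : Nat.Coprime a b) :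
    ¬ IsPrimeElem M b := by
  have ha1 : 1 ≤ a := Nat.one_le_iff_ne_zero.mpr ha.2.1
  obtain ⟨a', rfl⟩ : ∃ a', a = a' + 1 := ⟨a - 1, by omega⟩
  obtain ⟨b', rfl⟩ : ∃ b', b = b' + 1 := ⟨b - 1, by omega⟩
  rintro ⟨_, _, hp⟩
  have haM : (a' + 1) ∈ M := ha.1
  have hvM : b' * (a' + 1) ∈ M := by
    simpa [smul_eq_mul] using M.nsmul_mem haM b'
  have hex : ∃ c ∈ M, (a' + 1) + b' * (a' + 1) = (b' + 1) + c := by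
    refine ⟨a' * (b' + 1), ?_, by ring⟩
    simpa [smul_eq_mul] using M.nsmul_mem hb.1 a'
  rcases hp (a' + 1) haM (b' * (a' + 1)) hvM hex with ⟨c, hcM, hc⟩ | ⟨c, hcM, hc⟩
  · omega
  · obtain ⟨m, n, rfl⟩ := mem_char M hA hcM
    have hmb : m < b' := by
      by_contra hge
      push_neg at hge
      have : b' * (a' + 1) ≤ m * (a' + 1) := Nat.mul_le_mul_right _ hge
      nlinarith
    obtain ⟨d, rfl⟩ : ∃ d, b' = m + (d + 1) := ⟨b' - m - 1, by omega⟩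
    have key : (d + 1) * (a' + 1) = (n + 1) * (m + (d + 1) + 1) := by nlinarith
    have hdvd : (m + (d + 1) + 1) ∣ (d + 1) * (a' + 1) := ⟨n + 1, by rw [key]; ring⟩
    have hdd : (m + (d + 1) + 1) ∣ (d + 1) :=
      Nat.Coprime.dvd_of_dvd_mul_right hco.symm hdvd
    have := Nat.le_of_dvd (by omega) hdd
    omega

lemma purelyLong_small (hcof : {n : ℕ | n ∉ M}.Finite) {a b : ℕ}
    (hA : ∀ c, IsAtomOf M c → c = a ∨ c = b) (ha : IsAtomOf M a) (hb : IsAtomOf M b)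
    (hab : a < b) : PurelyLong M a := by
  have hco := coprime_of_atoms M hcof a b hA
  refine ⟨ha, not_prime_small M hA ha hb hab hco, ?_⟩
  intro z1 z2 hrel hirr hcards haz
  obtain ⟨k, hk, h1, h2⟩ := rel_struct M hA (Nat.ne_of_lt hab) ha.2.1 hb.2.1 hco hrel hirr haz
  rw [h1, h2]
  exact mul_lt_mul_of_pos_left hab hk

lemma purelyShort_big (hcof : {n : ℕ | n ∉ M}.Finite) {a b : ℕ}
    (hA : ∀ c, IsAtomOf M c → c = a ∨ c = b) (ha : IsAtomOf M a) (hb : IsAtomOf M b)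
    (hab : a < b) : PurelyShort M b := by
  have hco := coprime_of_atoms M hcof a b hA
  have hA' : ∀ c, IsAtomOf M c → c = b ∨ c = a := fun c hc => (hA c hc).symm
  refine ⟨hb, not_prime_large M hA ha hb hab hco, ?_⟩
  intro z1 z2 hrel hirr hcards hbz
  obtain ⟨k, hk, h1, h2⟩ := rel_struct M hA' (Nat.ne_of_gt hab) hb.2.1 ha.2.1 hco.symm hrel hirr hbz
  rw [h1, h2]
  exact mul_lt_mul_of_pos_left hab hk

lemma prime_of_single (hcof : {n : ℕ | n ∉ M}.Finite) {x : ℕ} (hx : IsAtomOf M x)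
    (honly : ∀ c, IsAtomOf M c → c = x) : IsPrimeElem M x := by
  obtain ⟨N, hN⟩ := exists_threshold M hcof
  have hdvd : ∀ y ∈ M, x ∣ y := by
    intro y hy
    obtain ⟨s, hs, rfl⟩ := exists_factors M y hy
    have hrep : s = Multiset.replicate (card s) x :=
      Multiset.eq_replicate_card.mpr (fun c hc => honly c (hs c hc))
    rw [hrep, Multiset.sum_replicate, smul_eq_mul]
    exact dvd_mul_left x _
  have hx1 : x = 1 := by
    have h1 := hdvd N (hN N le_rfl)
    have h2 := hdvd (N + 1) (hN _ (by omega))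
    have h3 : x ∣ 1 := by simpa using Nat.dvd_sub h2 h1
    exact Nat.dvd_one.mp h3
  subst hx1
  have hall : ∀ n : ℕ, n ∈ M := fun n => by simpa using M.nsmul_mem hx.1 n
  refine ⟨hx.1, one_ne_zero, fun u hu v hv hc => ?_⟩
  obtain ⟨c, hcM, h⟩ := hc
  rcases Nat.eq_zero_or_pos u with rfl | hu0
  · exact Or.inr ⟨v - 1, hall _, by omega⟩
  · exact Or.inl ⟨u - 1, hall _, by omega⟩

/-- A numerical monoid `N` has a purely long or a purely short atom if and
only if it has exactly two atoms (minimal generators); in that case the smaller generator is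
the unique purely long atom and the larger generator is the unique purely short atom. -/
theorem stmt17 (hcof : {n : ℕ | n ∉ M}.Finite) :
    (((∃ a, PurelyLong M a) ∨ (∃ a, PurelyShort M a)) ↔
        {a | IsAtomOf M a}.encard = 2) ∧
      ∀ a b : ℕ, IsAtomOf M a → IsAtomOf M b → a < b →
        {c | IsAtomOf M c} = {a, b} →
        {c | PurelyLong M c} = {a} ∧ {c | PurelyShort M c} = {b} := by
  constructor
  · constructor
    · rintro (⟨x, hx⟩ | ⟨x, hx⟩)
      · -- purely long
        have hxa := hx.1
        have h2 : ∃ y, IsAtomOf M y ∧ y ≠ x := by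
          by_contra h
          push_neg at h
          exact hx.2.1 (prime_of_single M hcof hxa (fun c hc => h c hc))
        obtain ⟨y, hy, hyx⟩ := h2
        have hset : {c | IsAtomOf M c} = {x, y} := by
          ext c
          simp only [Set.mem_setOf_eq, Set.mem_insert_iff, Set.mem_singleton_iff]
          constructor
          · intro hc
            by_contra hne
            push_neg at hne
            obtain ⟨hcx, hcy⟩ := hne
            rcases lt_or_gt_of_ne hcy with h | h
            · exact refute_long M hxa hc hy (Ne.symm hcx) (Ne.symm hcy) h hx
            · exact refute_long M hxa hy hc (Ne.symm hyx) hcy h hx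
          · rintro (rfl | rfl)
            exacts [hxa, hy]
        rw [hset]
        exact Set.encard_pair (Ne.symm hyx)
      · -- purely short
        have hxa := hx.1
        have h2 : ∃ y, IsAtomOf M y ∧ y ≠ x := by
          by_contra h
          push_neg at h
          exact hx.2.1 (prime_of_single M hcof hxa (fun c hc => h c hc))
        obtain ⟨y, hy, hyx⟩ := h2
        have hset : {c | IsAtomOf M c} = {x, y} := by
          ext c
          simp only [Set.mem_setOf_eq, Set.mem_insert_iff, Set.mem_singleton_iff]
          constructor
          · intro hc
            by_contra hne
            push_neg at hne
            obtain ⟨hcx, hcy⟩ := hne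
            rcases lt_or_gt_of_ne hcy with h | h
            · exact refute_short M hxa hy hc (Ne.symm hyx) hcy h hx
            · exact refute_short M hxa hc hy (Ne.symm hcx) (Ne.symm hcy) h hx
          · rintro (rfl | rfl)
            exacts [hxa, hy]
        rw [hset]
        exact Set.encard_pair (Ne.symm hyx)
    · intro h2
      obtain ⟨p, q, hpq, hset⟩ := Set.encard_eq_two.mp h2
      have hA : ∀ c, IsAtomOf M c → c = p ∨ c = q := by
        intro c hc
        have hc' : c ∈ {c | IsAtomOf M c} := hc
        rw [hset] at hc'
        simpa using hc'
      have hp : IsAtomOf M p := by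
        have : p ∈ {c | IsAtomOf M c} := by rw [hset]; exact Set.mem_insert p {q}
        exact this
      have hq : IsAtomOf M q := by
        have : q ∈ {c | IsAtomOf M c} := by
          rw [hset]; exact Set.mem_insert_of_mem p rfl
        exact this
      rcases lt_or_gt_of_ne hpq with h | h
      · exact Or.inl ⟨p, purelyLong_small M hcof hA hp hq h⟩
      · exact Or.inl ⟨q, purelyLong_small M hcof
          (fun c hc => (hA c hc).symm) hq hp h⟩
  · intro a b ha hb hlt hset
    have hA : ∀ c, IsAtomOf M c → c = a ∨ c = b := by
      intro c hc
      have hc' : c ∈ {c | IsAtomOf M c} := hc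
      rw [hset] at hc'
      simpa using hc'
    constructor
    · ext c
      simp only [Set.mem_setOf_eq, Set.mem_singleton_iff]
      constructor
      · intro hc
        rcases hA c hc.1 with rfl | rfl
        · rfl
        · exact absurd hc (refute_long M hb ha hb (Ne.symm (Nat.ne_of_lt hlt))
            (Ne.symm (Nat.ne_of_lt hlt)) hlt)
      · rintro rfl
        exact purelyLong_small M hcof hA ha hb hlt
    · ext c
      simp only [Set.mem_setOf_eq, Set.mem_singleton_iff]
      constructor
      · intro hc
        rcases hA c hc.1 with rfl | rfl
        · exact absurd hc (refute_short M ha hb ha (Nat.ne_of_lt hlt)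
            (Nat.ne_of_lt hlt) hlt)
        · rfl
      · rintro rfl
        exact purelyShort_big M hcof hA ha hb hlt

end LF
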